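/- Let S : ℝ^d → [0,∞) be integrable and let k(x,y) = ∫_{ℝ^d} cos(⟨u, x−y⟩) S(u) du. Then for every Schwartz function f ∈ 𝒮(ℝ^d) with ∫_{ℝ^d} |f̂(u)|² S(u)^{−1} du < ∞, every x ∈ ℝ^d, all points x₁,…,x_n ∈ ℝ^d and every λ ∈ ℝⁿ, one has (f(x) − Σᵢ λᵢ f(xᵢ))² ≤ (2π)^{−2d} (∫_{ℝ^d} |f̂(u)|² S(u)^{−1} du) · Qₙ(λ), where Qₙ(λ) = k(x,x) − 2 Σᵢ λᵢ k(x,xᵢ) + Σᵢⱼ λᵢλⱼ k(xᵢ,xⱼ). -/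

import Mathlib

open MeasureTheory Filter
open scoped RealInnerProductSpace

/-- The Fourier transform `f̂(u) = ∫ f(t) e^{−i⟨u,t⟩} dt`. -/
noncomputable def fourierT {d : ℕ} (f : EuclideanSpace ℝ (Fin d) → ℝ)
    (u : EuclideanSpace ℝ (Fin d)) : ℂ :=
  ∫ t, Complex.exp (-(Complex.I * (⟪u, t⟫ : ℝ))) * (f t : ℂ)

/-- The quadratic form `Qₙ(λ)`. -/
noncomputable def krigQ {d : ℕ}
    (k : EuclideanSpace ℝ (Fin d) → EuclideanSpace ℝ (Fin d) → ℝ)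
    (x : EuclideanSpace ℝ (Fin d)) {n : ℕ}
    (pts : Fin n → EuclideanSpace ℝ (Fin d)) (lam : Fin n → ℝ) : ℝ :=
  k x x - 2 * ∑ i, lam i * k x (pts i)
    + ∑ i, ∑ j, lam i * lam j * k (pts i) (pts j)

/-!
By Fourier inversion, `f x - ∑ i, lam i * f (pts i) = (2π)^{-d} ∫ f̂(u) E(u) du` with
`E(u) = e^{i⟨u,x⟩} - ∑ λᵢ e^{i⟨u,xᵢ⟩}`. Splitting `|f̂ E| = (|f̂| S^{-1/2}) (|E| S^{1/2})`, the
Cauchy–Schwarz inequality bounds the square of this integral by `∫ |f̂|² S⁻¹ · ∫ |E|² S`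
(integrate `2ab ≤ ε a² S⁻¹ + ε⁻¹ b² S` and optimise over `ε`), and expanding `|E(u)|²` into
cosines shows `∫ |E|² S = Qₙ(λ)`.
-/

theorem sq_le_mul_of_forall_two_mul_le {A B t : ℝ} (hA : 0 ≤ A) (hB : 0 ≤ B) (ht : 0 ≤ t)
    (h : ∀ ε > 0, 2 * t ≤ ε * A + ε⁻¹ * B) : t ^ 2 ≤ A * B := by
  -- `A ε² - 2 t ε + B ≥ 0` for every `ε`, so its discriminant is nonpositive
  have hquad : ∀ ε : ℝ, 0 ≤ A * (ε * ε) + -(2 * t) * ε + B := by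
    intro ε
    rcases le_or_gt ε 0 with hε | hε
    · nlinarith [mul_nonneg hA (mul_self_nonneg ε)]
    · have hεB : ε * (ε⁻¹ * B) = B := by field_simp
      nlinarith [mul_le_mul_of_nonneg_left (h ε hε) hε.le]
  have := discrim_le_zero hquad
  rw [discrim] at this
  nlinarith

theorem two_mul_mul_le_weighted {a b s ε : ℝ} (hs : 0 < s) (hε : 0 < ε) :
    2 * (a * b) ≤ ε * (a ^ 2 * s⁻¹) + ε⁻¹ * (b ^ 2 * s) := by
  have key : ε * (a ^ 2 * s⁻¹) + ε⁻¹ * (b ^ 2 * s) - 2 * (a * b)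
      = (ε * a - s * b) ^ 2 / (ε * s) := by
    field_simp
    ring
  have : 0 ≤ (ε * a - s * b) ^ 2 / (ε * s) := by positivity
  linarith

theorem sq_integral_mul_le_weighted {α : Type*} [MeasurableSpace α] {μ : Measure α}
    {a b S : α → ℝ} (ha : 0 ≤ a) (hb : 0 ≤ b) (hS : ∀ᵐ x ∂μ, 0 < S x)
    (haS : Integrable (fun x => a x ^ 2 * (S x)⁻¹) μ)
    (hbS : Integrable (fun x => b x ^ 2 * S x) μ) :
    (∫ x, a x * b x ∂μ) ^ 2 ≤ (∫ x, a x ^ 2 * (S x)⁻¹ ∂μ) * ∫ x, b x ^ 2 * S x ∂μ := by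
  have hS0 : ∀ᵐ x ∂μ, 0 ≤ S x := hS.mono fun _ h => h.le
  refine sq_le_mul_of_forall_two_mul_le
    (integral_nonneg_of_ae <| hS0.mono fun x h => mul_nonneg (sq_nonneg _) (inv_nonneg.2 h))
    (integral_nonneg_of_ae <| hS0.mono fun x h => mul_nonneg (sq_nonneg _) h)
    (integral_nonneg fun x => mul_nonneg (ha x) (hb x)) fun ε hε => ?_
  rw [← integral_const_mul, ← integral_const_mul, ← integral_const_mul,
    ← integral_add (haS.const_mul ε) (hbS.const_mul ε⁻¹)]
  exact integral_mono_of_nonneg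
    (.of_forall fun x => mul_nonneg zero_le_two (mul_nonneg (ha x) (hb x)))
    ((haS.const_mul ε).add (hbS.const_mul ε⁻¹))
    (hS.mono fun x hx => two_mul_mul_le_weighted hx hε)

section Residual

variable {V : Type*} [NormedAddCommGroup V] [InnerProductSpace ℝ V] {ι : Type*} [Fintype ι]

open Complex in
theorem real_inner_exp_mul_I (a b : ℝ) :
    ⟪exp (a * I), exp (b * I)⟫ = Real.cos (a - b) := by
  rw [Complex.inner, ← exp_conj, ← exp_add, map_mul, conj_ofReal, conj_I,
    show (b : ℂ) * I + a * -I = ((b - a : ℝ) : ℂ) * I by push_cast; ring,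
    exp_ofReal_mul_I_re, ← Real.cos_neg, neg_sub]

noncomputable def krigResidual (x : V) (pts : ι → V) (lam : ι → ℝ) (u : V) : ℂ :=
  Complex.exp (⟪u, x⟫ * Complex.I) - ∑ i, lam i • Complex.exp (⟪u, pts i⟫ * Complex.I)

theorem norm_krigResidual_sq (x : V) (pts : ι → V) (lam : ι → ℝ) (u : V) :
    ‖krigResidual x pts lam u‖ ^ 2 = 1 - 2 * ∑ i, lam i * Real.cos ⟪u, x - pts i⟫
      + ∑ i, ∑ j, lam i * lam j * Real.cos ⟪u, pts i - pts j⟫ := by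
  rw [krigResidual, norm_sub_sq_real, ← real_inner_self_eq_norm_sq (∑ i, _), sum_inner,
    inner_sum, Complex.norm_exp_ofReal_mul_I]
  simp_rw [inner_sum, real_inner_smul_left, real_inner_smul_right, real_inner_exp_mul_I,
    ← inner_sub_right, Finset.mul_sum, mul_assoc]
  ring

theorem norm_krigResidual_sq_mul (S : V → ℝ) (x : V) (pts : ι → V) (lam : ι → ℝ) :
    (fun u => ‖krigResidual x pts lam u‖ ^ 2 * S u) = fun u =>
      S u - 2 * ∑ i, lam i * (Real.cos ⟪u, x - pts i⟫ * S u)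
        + ∑ i, ∑ j, lam i * lam j * (Real.cos ⟪u, pts i - pts j⟫ * S u) := by
  ext u
  rw [norm_krigResidual_sq]
  simp only [sub_mul, add_mul, one_mul, Finset.sum_mul, mul_assoc]

variable [MeasurableSpace V] [OpensMeasurableSpace V] {μ : Measure V} {S : V → ℝ}

theorem integrable_cos_inner_mul (hS : Integrable S μ) (y : V) :
    Integrable (fun u => Real.cos ⟪u, y⟫ * S u) μ :=
  hS.bdd_mul (by fun_prop) (c := 1) (.of_forall fun u => by
    simpa only [Real.norm_eq_abs] using Real.abs_cos_le_one _)

theorem integrable_norm_krigResidual_sq_mul (hS : Integrable S μ) (x : V) (pts : ι → V)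
    (lam : ι → ℝ) : Integrable (fun u => ‖krigResidual x pts lam u‖ ^ 2 * S u) μ := by
  have hcos := integrable_cos_inner_mul hS
  rw [norm_krigResidual_sq_mul]
  exact (hS.sub ((integrable_finsetSum _ fun i _ => (hcos _).const_mul _).const_mul 2)).add
    (integrable_finsetSum _ fun i _ => integrable_finsetSum _ fun j _ => (hcos _).const_mul _)

theorem integral_norm_krigResidual_sq_mul {d n : ℕ} {μ : Measure (EuclideanSpace ℝ (Fin d))}
    {S : EuclideanSpace ℝ (Fin d) → ℝ} (hS : Integrable S μ)
    {k : EuclideanSpace ℝ (Fin d) → EuclideanSpace ℝ (Fin d) → ℝ}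
    (hk : ∀ x y, k x y = ∫ u, Real.cos ⟪u, x - y⟫ * S u ∂μ) (x : EuclideanSpace ℝ (Fin d))
    (pts : Fin n → EuclideanSpace ℝ (Fin d)) (lam : Fin n → ℝ) :
    ∫ u, ‖krigResidual x pts lam u‖ ^ 2 * S u ∂μ = krigQ k x pts lam := by
  have hcos := integrable_cos_inner_mul hS
  have hsum := integrable_finsetSum Finset.univ fun i _ => (hcos (x - pts i)).const_mul (lam i)
  rw [norm_krigResidual_sq_mul, integral_add (by exact hS.sub (hsum.const_mul 2))
      (integrable_finsetSum _ fun i _ => integrable_finsetSum _ fun j _ => (hcos _).const_mul _),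
    integral_sub hS (hsum.const_mul 2), integral_const_mul,
    integral_finsetSum _ fun i _ => (hcos _).const_mul _,
    integral_finsetSum _ fun i _ => integrable_finsetSum _ fun j _ => (hcos _).const_mul _]
  simp_rw [integral_finsetSum _ fun j _ => (hcos _).const_mul _, integral_const_mul, krigQ, hk,
    sub_self, inner_zero_right, Real.cos_zero, one_mul]

end Residual

section Fourier

open scoped FourierTransform SchwartzMap

variable {d : ℕ}

theorem fourierT_eq_fourier_smul (f : EuclideanSpace ℝ (Fin d) → ℝ)
    (u : EuclideanSpace ℝ (Fin d)) :
    fourierT f u = 𝓕 (fun t => (f t : ℂ)) ((2 * Real.pi)⁻¹ • u) := by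
  rw [Real.fourier_eq', fourierT]
  congr 1 with t
  rw [smul_eq_mul, real_inner_smul_right, real_inner_comm,
    show -2 * Real.pi * ((2 * Real.pi)⁻¹ * ⟪t, u⟫) = -⟪t, u⟫ by field_simp]
  push_cast
  ring_nf

theorem integrable_fourierT (f : 𝓢(EuclideanSpace ℝ (Fin d), ℝ)) :
    Integrable (fourierT (fun t => f t)) := by
  have hF : Integrable (𝓕 fun t => (f t : ℂ)) := (𝓕 (f.postcompCLM Complex.ofRealCLM)).integrable
  simpa only [← fourierT_eq_fourier_smul] using hF.comp_smul (inv_ne_zero Real.two_pi_pos.ne')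

theorem ofReal_eq_smul_integral_exp_mul_fourierT (f : 𝓢(EuclideanSpace ℝ (Fin d), ℝ))
    (y : EuclideanSpace ℝ (Fin d)) :
    (f y : ℂ) = ((2 * Real.pi) ^ d)⁻¹ •
      ∫ u, Complex.exp (⟪u, y⟫ * Complex.I) * fourierT (fun t => f t) u := by
  set fC := f.postcompCLM Complex.ofRealCLM
  have hinv : 𝓕⁻ (𝓕 ⇑fC) y = f y := by
    rw [fC.continuous.fourierInv_fourier_eq fC.integrable (𝓕 fC).integrable]
    rfl
  have hscale : ∫ u, Complex.exp (⟪u, y⟫ * Complex.I) * fourierT (fun t => f t) u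
      = (2 * Real.pi) ^ d • (f y : ℂ) := by
    have hcomp := Measure.integral_comp_inv_smul_of_nonneg volume
      (fun v => Complex.exp (↑(2 * Real.pi * ⟪v, y⟫) * Complex.I) • 𝓕 (⇑fC) v) Real.two_pi_pos.le
    rw [finrank_euclideanSpace_fin] at hcomp
    rw [← hinv, Real.fourierInv_eq', ← hcomp]
    congr 1 with u
    rw [fourierT_eq_fourier_smul, real_inner_smul_left, smul_eq_mul,
      mul_inv_cancel_left₀ Real.two_pi_pos.ne']
    rfl
  rw [hscale, smul_smul, inv_mul_cancel₀ (pow_ne_zero d Real.two_pi_pos.ne'), one_smul]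

theorem ofReal_sub_sum_eq_smul_integral_fourierT_mul_krigResidual
    (f : 𝓢(EuclideanSpace ℝ (Fin d), ℝ)) {ι : Type*} [Fintype ι] (x : EuclideanSpace ℝ (Fin d))
    (pts : ι → EuclideanSpace ℝ (Fin d)) (lam : ι → ℝ) :
    ((f x - ∑ i, lam i * f (pts i) : ℝ) : ℂ) = ((2 * Real.pi) ^ d)⁻¹ •
      ∫ u, fourierT (fun t => f t) u * krigResidual x pts lam u := by
  have hint (y : EuclideanSpace ℝ (Fin d)) :
      Integrable (fun u => Complex.exp (⟪u, y⟫ * Complex.I) * fourierT (fun t => f t) u) :=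
    (integrable_fourierT f).bdd_mul (by fun_prop) (c := 1)
      (.of_forall fun u => (Complex.norm_exp_ofReal_mul_I _).le)
  have hexpand : (fun u => fourierT (fun t => f t) u * krigResidual x pts lam u) = fun u =>
      Complex.exp (⟪u, x⟫ * Complex.I) * fourierT (fun t => f t) u
        - ∑ i, lam i • (Complex.exp (⟪u, pts i⟫ * Complex.I) * fourierT (fun t => f t) u) := by
    ext u
    rw [krigResidual, mul_comm, sub_mul, Finset.sum_mul]
    simp only [smul_mul_assoc]
  rw [hexpand, integral_sub (hint x) (integrable_finsetSum _ fun i _ => (hint _).fun_smul _),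
    integral_finsetSum _ fun i _ => (hint _).fun_smul _, smul_sub, Finset.smul_sum]
  simp only [integral_smul, smul_comm _ (lam _), ← ofReal_eq_smul_integral_exp_mul_fourierT]
  push_cast
  simp only [Complex.real_smul]

end Fourier

theorem schwartz_pred_error_le_of_spectral_general {d : ℕ}
    (S : EuclideanSpace ℝ (Fin d) → ℝ)
    (hS_int : Integrable S)
    (hS_pos : ∀ᵐ u : EuclideanSpace ℝ (Fin d), 0 < S u)
    (k : EuclideanSpace ℝ (Fin d) → EuclideanSpace ℝ (Fin d) → ℝ)
    (hk : ∀ x y, k x y = ∫ u, Real.cos ⟪u, x - y⟫ * S u)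
    (f : SchwartzMap (EuclideanSpace ℝ (Fin d)) ℝ)
    (hf : Integrable (fun u => ‖fourierT (fun t => f t) u‖ ^ 2 * (S u)⁻¹))
    (x : EuclideanSpace ℝ (Fin d)) (n : ℕ)
    (pts : Fin n → EuclideanSpace ℝ (Fin d)) (lam : Fin n → ℝ) :
    (f x - ∑ i, lam i * f (pts i)) ^ 2 ≤
      ((2 * Real.pi) ^ (2 * d))⁻¹ *
        (∫ u, ‖fourierT (fun t => f t) u‖ ^ 2 * (S u)⁻¹) *
        krigQ k x pts lam := by
  set τ := ∫ u, ‖fourierT (fun t => f t) u‖ * ‖krigResidual x pts lam u‖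
  have hrep : |f x - ∑ i, lam i * f (pts i)| ≤ ((2 * Real.pi) ^ d)⁻¹ * τ := by
    rw [← Real.norm_eq_abs, ← Complex.norm_real,
      ofReal_sub_sum_eq_smul_integral_fourierT_mul_krigResidual, norm_smul,
      Real.norm_of_nonneg (by positivity)]
    gcongr
    exact (norm_integral_le_integral_norm _).trans_eq (by simp only [τ, norm_mul])
  have hcs := sq_integral_mul_le_weighted (fun u => norm_nonneg _) (fun u => norm_nonneg _) hS_pos
    hf (integrable_norm_krigResidual_sq_mul hS_int x pts lam)
  rw [integral_norm_krigResidual_sq_mul hS_int hk] at hcs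
  calc (f x - ∑ i, lam i * f (pts i)) ^ 2
      = |f x - ∑ i, lam i * f (pts i)| ^ 2 := (sq_abs _).symm
    _ ≤ (((2 * Real.pi) ^ d)⁻¹ * τ) ^ 2 := pow_le_pow_left₀ (abs_nonneg _) hrep 2
    _ = ((2 * Real.pi) ^ (2 * d))⁻¹ * τ ^ 2 := by ring
    _ ≤ ((2 * Real.pi) ^ (2 * d))⁻¹ * ((∫ u, ‖fourierT (fun t => f t) u‖ ^ 2 * (S u)⁻¹) *
        krigQ k x pts lam) := by gcongr
    _ = _ := by ring

/-- For a stationary kernel with integrable spectral density `S` and a Schwartz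
function `f` with `∫ |f̂|² S⁻¹ < ∞`, one has
`(f(x) − Σᵢ λᵢ f(xᵢ))² ≤ (2π)^{−2d} (∫ |f̂(u)|² S(u)⁻¹ du) · Qₙ(λ)`. -/
theorem schwartz_pred_error_le_of_spectral {d : ℕ}
    (S : EuclideanSpace ℝ (Fin d) → ℝ)
    (hS_nonneg : ∀ u, 0 ≤ S u) (hS_int : Integrable S)
    (hS_pos : ∀ᵐ u : EuclideanSpace ℝ (Fin d), 0 < S u)
    (k : EuclideanSpace ℝ (Fin d) → EuclideanSpace ℝ (Fin d) → ℝ)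
    (hk : ∀ x y, k x y = ∫ u, Real.cos ⟪u, x - y⟫ * S u)
    (f : SchwartzMap (EuclideanSpace ℝ (Fin d)) ℝ)
    (hf : Integrable (fun u => ‖fourierT (fun t => f t) u‖ ^ 2 * (S u)⁻¹))
    (x : EuclideanSpace ℝ (Fin d)) (n : ℕ)
    (pts : Fin n → EuclideanSpace ℝ (Fin d)) (lam : Fin n → ℝ) :
    (f x - ∑ i, lam i * f (pts i)) ^ 2 ≤
      ((2 * Real.pi) ^ (2 * d))⁻¹ *
        (∫ u, ‖fourierT (fun t => f t) u‖ ^ 2 * (S u)⁻¹) *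
        krigQ k x pts lam :=
  schwartz_pred_error_le_of_spectral_general S hS_int hS_pos k hk f hf x n pts lam
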